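/- arXiv:1603.05096 — 6 statements merged into one kernel-verified Lean document; each statement's English description precedes it below -/
import Mathlib

section
/- Let n ≥ 1 be an integer, λ ∈ (0,1), and κ ≥ 2 an even integer, and let w = w_{λ,κ}. Then there exists a constant C = C(λ,κ) > 0 such that for all x, y ∈ ℝⁿ, |w(x) − w(y)| ≤ C · min(|x−y|, |x−y|^{λ/2}) · √(w(x)·w(y)). -/
open Real MeasureTheory

/-- The Muckenhoupt-type weight `w_{λ,κ}(x) = (1 + |x|^κ)^(−λ/κ)` on `ℝⁿ`. -/
noncomputable def weight (n : ℕ) (lam : ℝ) (kap : ℕ) (x : EuclideanSpace ℝ (Fin n)) : ℝ :=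
  (1 + ‖x‖ ^ kap) ^ (-(lam / (kap : ℝ)))

theorem pow_sub_pow_le' {r s : ℝ} (hr : 0 ≤ r) (hrs : r ≤ s) (k : ℕ) :
    s ^ k - r ^ k ≤ k * s ^ (k - 1) * (s - r) := by
  have hs : 0 ≤ s := hr.trans hrs
  have h := geom_sum₂_mul s r k
  rw [← h]
  have hsum : (∑ i ∈ Finset.range k, s ^ i * r ^ (k - 1 - i)) ≤ k * s ^ (k-1) := by
    calc (∑ i ∈ Finset.range k, s ^ i * r ^ (k - 1 - i))
        ≤ ∑ i ∈ Finset.range k, s ^ (k-1) := by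
          apply Finset.sum_le_sum
          intro i hi
          have hi' : i < k := Finset.mem_range.mp hi
          calc s ^ i * r ^ (k - 1 - i) ≤ s ^ i * s ^ (k - 1 - i) := by
                exact mul_le_mul_of_nonneg_left (pow_le_pow_left₀ hr hrs _) (pow_nonneg hs i)
            _ = s ^ (i + (k - 1 - i)) := (pow_add s i _).symm
            _ = s ^ (k - 1) := by congr 1; omega
      _ = k * s ^ (k-1) := by rw [Finset.sum_const, Finset.card_range, nsmul_eq_mul]
  exact mul_le_mul_of_nonneg_right hsum (by linarith)

theorem flip' {c : ℝ} (hc0 : 0 < c) (hc1 : c ≤ 1) {k : ℕ} (hk : 1 ≤ k) {r s : ℝ}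
    (hr : 0 ≤ r) (hrs : r ≤ s) :
    (1 + r ^ k) ^ (-c) - (1 + s ^ k) ^ (-c) ≤ k * (s - r) * (1 + r ^ k) ^ (-c) := by
  have hs : 0 ≤ s := hr.trans hrs
  set A : ℝ := 1 + r ^ k with hA
  set B : ℝ := 1 + s ^ k with hB
  have hA1 : (1:ℝ) ≤ A := by have := pow_nonneg hr k; rw [hA]; linarith
  have hA0 : (0:ℝ) < A := by linarith
  have hAB : A ≤ B := by
    have := pow_le_pow_left₀ hr hrs k; rw [hA, hB]; linarith
  have hB0 : (0:ℝ) < B := lt_of_lt_of_le hA0 hAB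
  have hq0 : 0 < A / B := div_pos hA0 hB0
  have hq1 : A / B ≤ 1 := (div_le_one hB0).mpr hAB
  have hAc0 : (0:ℝ) ≤ A ^ (-c) := Real.rpow_nonneg hA0.le _
  have step1 : B ^ (-c) = A ^ (-c) * (A / B) ^ c := by
    have h1 : A ^ (-c) * A ^ c = 1 := by
      rw [← Real.rpow_add hA0]; simp
    rw [Real.div_rpow hA0.le hB0.le]
    calc B ^ (-c) = (A ^ (-c) * A ^ c) * B ^ (-c) := by rw [h1, one_mul]
      _ = A ^ (-c) * (A ^ c / B ^ c) := by
          rw [Real.rpow_neg hB0.le]; ring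
  have step2 : A / B ≤ (A / B) ^ c := by
    have := Real.rpow_le_rpow_of_exponent_ge hq0 hq1 hc1
    rwa [Real.rpow_one] at this
  have step3 : A ^ (-c) * (A / B) ≤ B ^ (-c) := by
    rw [step1]
    exact mul_le_mul_of_nonneg_left step2 hAc0
  have hsk1 : s ^ (k - 1) ≤ B := by
    rcases le_total s 1 with h | h
    · have : s ^ (k-1) ≤ 1 := pow_le_one₀ hs h
      have := pow_nonneg hs k; rw [hB]; linarith
    · have h1 : s ^ (k-1) ≤ s ^ k := pow_le_pow_right₀ h (Nat.sub_le k 1)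
      rw [hB]; linarith
  have hpow : s ^ k - r ^ k ≤ k * s ^ (k-1) * (s - r) := pow_sub_pow_le' hr hrs k
  have hfrac : (B - A) / B ≤ k * (s - r) := by
    rw [div_le_iff₀ hB0]
    have hBA : B - A = s ^ k - r ^ k := by rw [hA, hB]; ring
    have h2 : (k:ℝ) * s ^ (k-1) * (s - r) = ((k:ℝ) * (s - r)) * s ^ (k-1) := by ring
    have h3 : ((k:ℝ) * (s - r)) * s ^ (k-1) ≤ ((k:ℝ) * (s - r)) * B :=
      mul_le_mul_of_nonneg_left hsk1 (mul_nonneg (Nat.cast_nonneg k) (by linarith))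
    calc B - A ≤ (k:ℝ) * (s - r) * s ^ (k-1) := by rw [hBA]; linarith [hpow]
      _ ≤ (k:ℝ) * (s - r) * B := h3
  calc A ^ (-c) - B ^ (-c) ≤ A ^ (-c) - A ^ (-c) * (A / B) := by linarith [step3]
    _ = A ^ (-c) * ((B - A) / B) := by field_simp
    _ ≤ A ^ (-c) * ((k:ℝ) * (s - r)) := mul_le_mul_of_nonneg_left hfrac hAc0
    _ = (k:ℝ) * (s - r) * A ^ (-c) := by ring

theorem fratio' {c : ℝ} (hc0 : 0 < c) (hc1 : c ≤ 1) {k : ℕ} (hk : 1 ≤ k) {r s t : ℝ}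
    (hr : 0 ≤ r) (hs : 0 ≤ s) (ht : 0 ≤ t) (hst : s ≤ r + t) :
    (1 + r ^ k) ^ (-c) ≤ 2 ^ (k+1) * (max 1 t) ^ ((k:ℝ) * c) * (1 + s ^ k) ^ (-c) := by
  set u : ℝ := max 1 t with hu
  have hu1 : (1:ℝ) ≤ u := le_max_left 1 t
  have hu0 : (0:ℝ) < u := lt_of_lt_of_le one_pos hu1
  set D : ℝ := 2 ^ (k+1) * u ^ k with hD
  have hD1 : (1:ℝ) ≤ D := by
    have h1 : (1:ℝ) ≤ 2 ^ (k+1) := one_le_pow₀ (by norm_num)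
    have h2 : (1:ℝ) ≤ u ^ k := one_le_pow₀ hu1
    calc (1:ℝ) = 1 * 1 := by ring
      _ ≤ 2 ^ (k+1) * u ^ k := mul_le_mul h1 h2 zero_le_one (by positivity)
  have hD0 : (0:ℝ) < D := lt_of_lt_of_le one_pos hD1
  have hA0 : (0:ℝ) < 1 + r ^ k := by positivity
  have hB0 : (0:ℝ) < 1 + s ^ k := by positivity
  have hBD : 1 + s ^ k ≤ D * (1 + r ^ k) := by
    have h1 : s ^ k ≤ (r + t) ^ k := pow_le_pow_left₀ hs hst k
    have h2 : r + t ≤ 2 * max r t := by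
      have := le_max_left r t; have := le_max_right r t; linarith
    have h3 : (r + t) ^ k ≤ (2 * max r t) ^ k :=
      pow_le_pow_left₀ (by linarith) h2 k
    have h4 : (2 * max r t) ^ k = 2 ^ k * (max r t) ^ k := mul_pow 2 _ k
    have h5 : (max r t) ^ k ≤ r ^ k + t ^ k := by
      rcases le_total r t with h | h
      · rw [max_eq_right h]; have := pow_nonneg hr k; linarith
      · rw [max_eq_left h]; have := pow_nonneg ht k; linarith
    have h6 : t ^ k ≤ u ^ k := pow_le_pow_left₀ ht (le_max_right 1 t) k
    have h7 : (1:ℝ) ≤ u ^ k := one_le_pow₀ hu1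
    have h8 : (0:ℝ) ≤ r ^ k := pow_nonneg hr k
    have h9 : (1:ℝ) ≤ (2:ℝ) ^ k := one_le_pow₀ (by norm_num)
    have hsk : s ^ k ≤ 2 ^ k * (r ^ k + t ^ k) := by
      calc s ^ k ≤ (2 * max r t) ^ k := le_trans h1 h3
        _ = 2 ^ k * (max r t) ^ k := h4
        _ ≤ 2 ^ k * (r ^ k + t ^ k) := by
            exact mul_le_mul_of_nonneg_left h5 (by positivity)
    have hDexp : D = 2 * 2 ^ k * u ^ k := by rw [hD, pow_succ]; ring
    rw [hDexp]
    nlinarith [hsk, h6, h7, h8, h9,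
      mul_nonneg (sub_nonneg.mpr h7) (mul_nonneg (pow_nonneg (by norm_num : (0:ℝ) ≤ 2) k) (by linarith : (0:ℝ) ≤ 1 + r ^ k)),
      mul_nonneg (sub_nonneg.mpr h6) (mul_nonneg (pow_nonneg (by norm_num : (0:ℝ) ≤ 2) k) (by linarith : (0:ℝ) ≤ 1 + r ^ k)),
      mul_nonneg (mul_nonneg (pow_nonneg (by norm_num : (0:ℝ) ≤ 2) k) (pow_nonneg ht k)) h8]
  have h1 : (1 + s ^ k) / D ≤ 1 + r ^ k := by
    rw [div_le_iff₀ hD0]; linarith [hBD]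
  have h2 : (1 + r ^ k) ^ (-c) ≤ ((1 + s ^ k) / D) ^ (-c) :=
    Real.rpow_le_rpow_of_nonpos (div_pos hB0 hD0) h1 (neg_nonpos.mpr hc0.le)
  have h3 : ((1 + s ^ k) / D) ^ (-c) = D ^ c * (1 + s ^ k) ^ (-c) := by
    rw [Real.div_rpow hB0.le hD0.le, Real.rpow_neg hD0.le, div_eq_mul_inv, inv_inv]; ring
  have h4 : D ^ c = (2 ^ (k+1) : ℝ) ^ c * (u ^ k) ^ c :=
    Real.mul_rpow (by positivity) (by positivity)
  have h5 : ((2:ℝ) ^ (k+1)) ^ c ≤ 2 ^ (k+1) := by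
    have h := Real.rpow_le_rpow_of_exponent_le (one_le_pow₀ (by norm_num : (1:ℝ) ≤ 2) : (1:ℝ) ≤ 2 ^ (k+1)) hc1
    rwa [Real.rpow_one] at h
  have h6 : (u ^ k) ^ c = u ^ ((k:ℝ) * c) := by
    rw [← Real.rpow_natCast u k, ← Real.rpow_mul hu0.le]
  have h7 : (0:ℝ) ≤ u ^ ((k:ℝ) * c) * (1 + s ^ k) ^ (-c) := by positivity
  calc (1 + r ^ k) ^ (-c) ≤ ((1 + s ^ k) / D) ^ (-c) := h2
    _ = (2 ^ (k+1) : ℝ) ^ c * (u ^ ((k:ℝ)*c) * (1 + s ^ k) ^ (-c)) := by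
        rw [h3, h4, h6]; ring
    _ ≤ (2:ℝ) ^ (k+1) * (u ^ ((k:ℝ)*c) * (1 + s ^ k) ^ (-c)) :=
        mul_le_mul_of_nonneg_right h5 h7
    _ = 2 ^ (k+1) * u ^ ((k:ℝ)*c) * (1 + s ^ k) ^ (-c) := by ring


theorem aux_main (n : ℕ) (lam : ℝ) (hlam : lam ∈ Set.Ioo (0 : ℝ) 1)
    (kap : ℕ) (hkap : 2 ≤ kap) (x y : EuclideanSpace ℝ (Fin n)) (hxy : ‖x‖ ≤ ‖y‖) :
    |weight n lam kap x - weight n lam kap y| ≤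
      ((kap : ℝ) * 2 ^ (kap + 1)) * min ‖x - y‖ (‖x - y‖ ^ (lam / 2)) *
        Real.sqrt (weight n lam kap x * weight n lam kap y) := by
  obtain ⟨hl0, hl1⟩ := hlam
  have hkap0 : (0:ℝ) < (kap:ℝ) := by positivity
  have hc0 : 0 < lam / (kap:ℝ) := div_pos hl0 hkap0
  have hc1 : lam / (kap:ℝ) ≤ 1 := by
    rw [div_le_one hkap0]
    have : (2:ℝ) ≤ (kap:ℝ) := by exact_mod_cast hkap
    linarith
  have hk1 : 1 ≤ kap := by omega
  have hr : (0:ℝ) ≤ ‖x‖ := norm_nonneg x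
  have hs : (0:ℝ) ≤ ‖y‖ := norm_nonneg y
  have ht : (0:ℝ) ≤ ‖x - y‖ := norm_nonneg _
  have hst : ‖y‖ ≤ ‖x‖ + ‖x - y‖ := by
    have h := norm_sub_le x (x - y)
    simpa using h
  have hdiff : ‖y‖ - ‖x‖ ≤ ‖x - y‖ := by
    have h := norm_sub_norm_le y x
    rwa [norm_sub_rev] at h
  set t : ℝ := ‖x - y‖ with htdef
  set wx : ℝ := weight n lam kap x with hwx
  set wy : ℝ := weight n lam kap y with hwy
  have hwxeq : wx = (1 + ‖x‖ ^ kap) ^ (-(lam / (kap:ℝ))) := rfl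
  have hwyeq : wy = (1 + ‖y‖ ^ kap) ^ (-(lam / (kap:ℝ))) := rfl
  have hwx0 : 0 < wx := by rw [hwxeq]; positivity
  have hwy0 : 0 < wy := by rw [hwyeq]; positivity
  have hwyx : wy ≤ wx := by
    rw [hwxeq, hwyeq]
    apply Real.rpow_le_rpow_of_nonpos (by positivity)
    · have := pow_le_pow_left₀ hr hxy kap; linarith
    · simp [neg_nonpos]; positivity
  have habs : |wx - wy| = wx - wy := abs_of_nonneg (by linarith)
  have hlip : wx - wy ≤ (kap:ℝ) * (‖y‖ - ‖x‖) * wx := by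
    rw [hwxeq, hwyeq]
    exact flip' hc0 hc1 hk1 hr hxy
  have hlip2 : wx - wy ≤ (kap:ℝ) * t * wx := by
    have h := mul_le_mul_of_nonneg_right
      (mul_le_mul_of_nonneg_left hdiff hkap0.le) hwx0.le
    linarith
  set K : ℝ := 2 ^ (kap + 1) with hK
  have hK1 : (1:ℝ) ≤ K := one_le_pow₀ (by norm_num)
  have hK0 : (0:ℝ) < K := by positivity
  set u : ℝ := max 1 t with hu
  have hu1 : (1:ℝ) ≤ u := le_max_left 1 t
  have hu0 : (0:ℝ) < u := lt_of_lt_of_le one_pos hu1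
  have hexp : (kap:ℝ) * (lam / (kap:ℝ)) = lam := by field_simp
  have hratio : wx ≤ K * u ^ lam * wy := by
    rw [hwxeq, hwyeq]
    have h := fratio' hc0 hc1 hk1 hr hs ht hst
    rwa [hexp] at h
  have hsqK : Real.sqrt K ≤ K := by
    nlinarith [Real.sq_sqrt hK0.le, Real.sqrt_nonneg K, mul_self_nonneg (Real.sqrt K - 1)]
  have hsqrtu : Real.sqrt (u ^ lam) = u ^ (lam / 2) := by
    rw [show lam = lam / 2 * 2 by ring, Real.rpow_mul hu0.le]
    rw [show ((lam / 2 * 2) / 2) = lam / 2 by ring]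
    rw [show (2:ℝ) = ((2:ℕ):ℝ) by norm_num, Real.rpow_natCast]
    exact Real.sqrt_sq (Real.rpow_nonneg hu0.le _)
  have hsq : wx ≤ Real.sqrt K * u ^ (lam / 2) * Real.sqrt (wx * wy) := by
    have h1 : wx = Real.sqrt (wx * wx) := (Real.sqrt_mul_self hwx0.le).symm
    have h2 : wx * wx ≤ (K * u ^ lam) * (wx * wy) := by
      have := mul_le_mul_of_nonneg_right hratio hwx0.le
      nlinarith [this]
    calc wx = Real.sqrt (wx * wx) := h1
      _ ≤ Real.sqrt ((K * u ^ lam) * (wx * wy)) := Real.sqrt_le_sqrt h2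
      _ = Real.sqrt K * Real.sqrt (u ^ lam) * Real.sqrt (wx * wy) := by
          rw [Real.sqrt_mul (by positivity), Real.sqrt_mul hK0.le]
      _ = Real.sqrt K * u ^ (lam / 2) * Real.sqrt (wx * wy) := by rw [hsqrtu]
  have hsw0 : 0 ≤ Real.sqrt (wx * wy) := Real.sqrt_nonneg _
  rcases le_total t 1 with ht1 | ht1
  · -- t ≤ 1
    have hmin : min t (t ^ (lam / 2)) = t := by
      apply min_eq_left
      rcases eq_or_lt_of_le ht with h0 | h0
      · rw [← h0, Real.zero_rpow (by positivity : lam / 2 ≠ 0)]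
      · have h := Real.rpow_le_rpow_of_exponent_ge h0 ht1 (by linarith : lam / 2 ≤ 1)
        rwa [Real.rpow_one] at h
    have huv : u = 1 := max_eq_left ht1
    have hsq' : wx ≤ Real.sqrt K * Real.sqrt (wx * wy) := by
      have := hsq
      rwa [huv, Real.one_rpow, mul_one] at this
    rw [habs, hmin]
    calc wx - wy ≤ (kap:ℝ) * t * wx := hlip2
      _ ≤ (kap:ℝ) * t * (Real.sqrt K * Real.sqrt (wx * wy)) := by
          apply mul_le_mul_of_nonneg_left hsq' (by positivity)
      _ ≤ (kap:ℝ) * t * (K * Real.sqrt (wx * wy)) := by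
          apply mul_le_mul_of_nonneg_left
            (mul_le_mul_of_nonneg_right hsqK hsw0) (by positivity)
      _ = (kap:ℝ) * K * t * Real.sqrt (wx * wy) := by ring
  · -- 1 ≤ t
    have hmin : min t (t ^ (lam / 2)) = t ^ (lam / 2) := by
      apply min_eq_right
      have h := Real.rpow_le_rpow_of_exponent_le ht1 (by linarith : lam / 2 ≤ 1)
      rwa [Real.rpow_one] at h
    have huv : u = t := max_eq_right ht1
    rw [habs, hmin]
    have hKle : Real.sqrt K ≤ (kap:ℝ) * K := by
      have h2 : (1:ℝ) ≤ (kap:ℝ) := by exact_mod_cast (by omega : 1 ≤ kap)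
      have h3 : K ≤ (kap:ℝ) * K := le_mul_of_one_le_left hK0.le h2
      linarith [hsqK]
    calc wx - wy ≤ wx := by linarith
      _ ≤ Real.sqrt K * u ^ (lam / 2) * Real.sqrt (wx * wy) := hsq
      _ = Real.sqrt K * (t ^ (lam / 2) * Real.sqrt (wx * wy)) := by rw [huv]; ring
      _ ≤ (kap:ℝ) * K * (t ^ (lam / 2) * Real.sqrt (wx * wy)) := by
          apply mul_le_mul_of_nonneg_right hKle (by positivity)
      _ = (kap:ℝ) * K * t ^ (lam / 2) * Real.sqrt (wx * wy) := by ring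

theorem stmt_0 (n : ℕ) (hn : 1 ≤ n) (lam : ℝ) (hlam : lam ∈ Set.Ioo (0 : ℝ) 1)
    (kap : ℕ) (hkap : 2 ≤ kap) (hke : Even kap) :
    ∃ C > 0, ∀ x y : EuclideanSpace ℝ (Fin n),
      |weight n lam kap x - weight n lam kap y| ≤
        C * min ‖x - y‖ (‖x - y‖ ^ (lam / 2)) *
          Real.sqrt (weight n lam kap x * weight n lam kap y) := by
  refine ⟨(kap : ℝ) * 2 ^ (kap + 1), by positivity, fun x y => ?_⟩
  rcases le_total ‖x‖ ‖y‖ with h | h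
  · exact aux_main n lam hlam kap hkap x y h
  · have := aux_main n lam hlam kap hkap y x h
    rwa [abs_sub_comm, norm_sub_rev, mul_comm (weight n lam kap y)] at this
end

section
/- Let n ≥ 1 be an integer, λ ∈ (0,1), and κ ≥ 2 an even integer, and let w = w_{λ,κ}. Then there exists a constant C = C(λ,κ) > 0 such that for all x, y ∈ ℝⁿ satisfying |x−y| > 1, |x| ≤ 2|x−y|, and |y| ≤ 2|x−y|, one has w(x) + w(y) ≤ C |x−y|^{λ/2} √(w(x)·w(y)). -/
open Real MeasureTheory

theorem stmt_1 (n : ℕ) (hn : 1 ≤ n) (lam : ℝ) (hlam : lam ∈ Set.Ioo (0 : ℝ) 1)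
    (kap : ℕ) (hkap : 2 ≤ kap) (hke : Even kap) :
    ∃ C > 0, ∀ x y : EuclideanSpace ℝ (Fin n),
      1 < ‖x - y‖ → ‖x‖ ≤ 2 * ‖x - y‖ → ‖y‖ ≤ 2 * ‖x - y‖ →
      weight n lam kap x + weight n lam kap y ≤
        C * ‖x - y‖ ^ (lam / 2) *
          Real.sqrt (weight n lam kap x * weight n lam kap y) := by
  obtain ⟨hl0, hl1⟩ := hlam
  have hk0 : (0:ℝ) < (kap:ℝ) := by exact_mod_cast lt_of_lt_of_le two_pos hkap
  set B : ℝ := 1 + 2 ^ kap with hBdef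
  have hB1 : (1:ℝ) < B := by
    have : (0:ℝ) < 2 ^ kap := by positivity
    have h2 : (0:ℝ) < 2 ^ kap := by positivity
    simp only [hBdef]; linarith
  have hB0 : (0:ℝ) < B := lt_trans one_pos hB1
  set A : ℝ := B ^ (lam / (2 * (kap:ℝ))) with hAdef
  have hA0 : 0 < A := Real.rpow_pos_of_pos hB0 _
  refine ⟨2 * A, by positivity, ?_⟩
  intro x y hd hx hy
  set d := ‖x - y‖ with hddef
  have hd0 : (0:ℝ) < d := lt_trans one_pos hd
  have wpos : ∀ z : EuclideanSpace ℝ (Fin n), 0 < weight n lam kap z := by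
    intro z
    have : (0:ℝ) < 1 + ‖z‖ ^ kap := by positivity
    exact Real.rpow_pos_of_pos this _
  have wle1 : ∀ z : EuclideanSpace ℝ (Fin n), weight n lam kap z ≤ 1 := by
    intro z
    apply Real.rpow_le_one_of_one_le_of_nonpos
    · nlinarith [pow_nonneg (norm_nonneg z) kap]
    · have : 0 ≤ lam / (kap:ℝ) := by positivity
      linarith
  have key : ∀ z : EuclideanSpace ℝ (Fin n), ‖z‖ ≤ 2 * d →
      1 ≤ A * d ^ (lam / 2) * Real.sqrt (weight n lam kap z) := by
    intro z hz
    have hdk1 : (1:ℝ) ≤ d ^ kap := one_le_pow₀ hd.le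
    have hbase : 1 + ‖z‖ ^ kap ≤ B * d ^ kap := by
      have h1 : ‖z‖ ^ kap ≤ (2 * d) ^ kap :=
        pow_le_pow_left₀ (norm_nonneg z) hz kap
      have h2 : (2 * d) ^ kap = 2 ^ kap * d ^ kap := by ring
      rw [hBdef]; nlinarith [pow_nonneg hd0.le kap]
    have hwlb : (B * d ^ kap) ^ (-(lam / (kap:ℝ))) ≤ weight n lam kap z := by
      apply Real.rpow_le_rpow_of_nonpos (by positivity) hbase
      have : 0 ≤ lam / (kap:ℝ) := by positivity
      linarith
    have hcomp : (B * d ^ kap) ^ (-(lam / (kap:ℝ))) =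
        (B ^ (-(lam / (kap:ℝ)))) * (d ^ (-lam)) := by
      have hexp : (kap:ℝ) * (-(lam / (kap:ℝ))) = -lam := by field_simp
      rw [Real.mul_rpow hB0.le (by positivity), ← Real.rpow_natCast d kap,
        ← Real.rpow_mul hd0.le, hexp]
    have hs : Real.sqrt ((B ^ (-(lam / (kap:ℝ)))) * (d ^ (-lam)))
        ≤ Real.sqrt (weight n lam kap z) := by
      apply Real.sqrt_le_sqrt
      rw [← hcomp]; exact hwlb
    have hseq : Real.sqrt ((B ^ (-(lam / (kap:ℝ)))) * (d ^ (-lam)))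
        = B ^ (-(lam / (2 * (kap:ℝ)))) * d ^ (-(lam / 2)) := by
      rw [Real.sqrt_mul (by positivity), Real.sqrt_eq_rpow, Real.sqrt_eq_rpow,
        ← Real.rpow_mul hB0.le, ← Real.rpow_mul hd0.le]
      congr 1
      · congr 1
        rw [neg_mul, neg_inj, div_mul_div_comm, mul_one, mul_comm (kap:ℝ) 2]
      · congr 1; ring
    have h1 : A * d ^ (lam / 2) * (B ^ (-(lam / (2 * (kap:ℝ)))) * d ^ (-(lam / 2))) = 1 := by
      rw [hAdef, Real.rpow_neg hB0.le, Real.rpow_neg hd0.le]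
      have hA0' : (0:ℝ) < B ^ (lam / (2 * (kap:ℝ))) := Real.rpow_pos_of_pos hB0 _
      have hd0' : (0:ℝ) < d ^ (lam / 2) := Real.rpow_pos_of_pos hd0 _
      field_simp
    calc (1:ℝ) = A * d ^ (lam / 2) * (B ^ (-(lam / (2 * (kap:ℝ)))) * d ^ (-(lam / 2))) := h1.symm
    _ ≤ A * d ^ (lam / 2) * Real.sqrt (weight n lam kap z) := by
        apply mul_le_mul_of_nonneg_left _ (by positivity)
        rw [← hseq]; exact hs
  have wlesqrt : ∀ z : EuclideanSpace ℝ (Fin n),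
      weight n lam kap z ≤ Real.sqrt (weight n lam kap z) := by
    intro z
    have h1 := Real.sq_sqrt (wpos z).le
    have h2 : Real.sqrt (weight n lam kap z) ≤ 1 := by
      rw [show (1:ℝ) = Real.sqrt 1 by simp]
      exact Real.sqrt_le_sqrt (wle1 z)
    nlinarith [Real.sqrt_nonneg (weight n lam kap z)]
  have hxk := key y hy
  have hyk := key x hx
  have hsx := Real.sqrt_nonneg (weight n lam kap x)
  have hsy := Real.sqrt_nonneg (weight n lam kap y)
  have e1 : weight n lam kap x ≤ Real.sqrt (weight n lam kap x)
      * (A * d ^ (lam / 2) * Real.sqrt (weight n lam kap y)) := by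
    calc weight n lam kap x ≤ Real.sqrt (weight n lam kap x) := wlesqrt x
    _ = Real.sqrt (weight n lam kap x) * 1 := by ring
    _ ≤ _ := by apply mul_le_mul_of_nonneg_left hxk hsx
  have e2 : weight n lam kap y ≤ Real.sqrt (weight n lam kap y)
      * (A * d ^ (lam / 2) * Real.sqrt (weight n lam kap x)) := by
    calc weight n lam kap y ≤ Real.sqrt (weight n lam kap y) := wlesqrt y
    _ = Real.sqrt (weight n lam kap y) * 1 := by ring
    _ ≤ _ := by apply mul_le_mul_of_nonneg_left hyk hsy
  have hsqmul : Real.sqrt (weight n lam kap x * weight n lam kap y)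
      = Real.sqrt (weight n lam kap x) * Real.sqrt (weight n lam kap y) :=
    Real.sqrt_mul (wpos x).le _
  rw [hsqmul]
  nlinarith [Real.rpow_pos_of_pos hd0 (lam/2)]
end

section
/- Let n ≥ 1 be an integer, λ ∈ (0,1), and κ ≥ 2 an even integer. The weight w = w_{λ,κ} is twice continuously differentiable on ℝⁿ and there exists a constant C = C(n,λ,κ) > 0 such that the operator norm of the second derivative (Hessian) satisfies ‖∇²w(x)‖ ≤ C · w(x) for all x ∈ ℝⁿ. -/
open Real MeasureTheory

/-!
Writing `κ = 2h` and `p = -λ/κ`, the weight is radial: `w(x) = φ(‖x‖²)` with `φ(t) = (1 + t^h)^p`.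
The Hessian of `x ↦ φ(‖x‖²)` is `2φ'(‖x‖²) ⟪·, ·⟫ + 4φ''(‖x‖²) ⟪x, ·⟫ ⟪x, ·⟫`, whose norm is at most
`2|φ'(s)| + 4s|φ''(s)|` with `s = ‖x‖²`. Both terms are `O(φ(s))`: each factor `t^(h-1)` or `t^h`
produced by differentiating is bounded by `1 + t^h` for `t ≥ 0`, and is absorbed by lowering the
exponent `p - 1` or `p - 2` of `1 + t^h` back to `p`.
-/

section Radial

variable {E : Type*} [NormedAddCommGroup E] [InnerProductSpace ℝ E] {φ φ' φ'' : ℝ → ℝ}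

theorem hasFDerivAt_comp_norm_sq {x : E} (hφ : HasDerivAt φ (φ' (‖x‖ ^ 2)) (‖x‖ ^ 2)) :
    HasFDerivAt (fun y : E => φ (‖y‖ ^ 2)) ((2 * φ' (‖x‖ ^ 2)) • innerSL ℝ x) x := by
  refine (hφ.comp_hasFDerivAt x (hasStrictFDerivAt_norm_sq x).hasFDerivAt).congr_fderiv ?_
  rw [two_smul, smul_add, two_mul, add_smul]

theorem norm_iteratedFDeriv_two_comp_norm_sq_le
    (hφ : ∀ t, 0 ≤ t → HasDerivAt φ (φ' t) t) (hφ' : ∀ t, 0 ≤ t → HasDerivAt φ' (φ'' t) t)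
    (x : E) :
    ‖iteratedFDeriv ℝ 2 (fun y : E => φ (‖y‖ ^ 2)) x‖
      ≤ 2 * |φ' (‖x‖ ^ 2)| + 4 * |φ'' (‖x‖ ^ 2)| * ‖x‖ ^ 2 := by
  set L : E →L[ℝ] E →L[ℝ] ℝ := innerSL ℝ
  have hD : fderiv ℝ (fun y : E => φ (‖y‖ ^ 2)) = fun y => (2 * φ' (‖y‖ ^ 2)) • L y :=
    funext fun y => (hasFDerivAt_comp_norm_sq (hφ _ (sq_nonneg _))).fderiv
  have hc : HasFDerivAt (fun y : E => 2 * φ' (‖y‖ ^ 2)) ((4 * φ'' (‖x‖ ^ 2)) • L x) x := by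
    refine ((hasFDerivAt_comp_norm_sq (hφ' _ (sq_nonneg ‖x‖))).const_mul 2).congr_fderiv ?_
    rw [smul_smul]
    congr 1
    ring
  have hD2 : HasFDerivAt (fun y => (2 * φ' (‖y‖ ^ 2)) • L y) _ x := hc.smul L.hasFDerivAt
  rw [← norm_iteratedFDeriv_fderiv, norm_iteratedFDeriv_one, hD, hD2.fderiv]
  calc _ ≤ ‖(2 * φ' (‖x‖ ^ 2)) • L‖ + ‖((4 * φ'' (‖x‖ ^ 2)) • L x).smulRight (L x)‖ :=
        norm_add_le _ _
    _ ≤ ‖2 * φ' (‖x‖ ^ 2)‖ * ‖L‖ + ‖4 * φ'' (‖x‖ ^ 2)‖ * ‖L x‖ * ‖L x‖ := by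
        rw [ContinuousLinearMap.norm_smulRight_apply]
        gcongr <;> exact ContinuousLinearMap.opNorm_smul_le _ _
    _ ≤ ‖2 * φ' (‖x‖ ^ 2)‖ * 1 + ‖4 * φ'' (‖x‖ ^ 2)‖ * ‖x‖ * ‖x‖ := by
        rw [show ‖L x‖ = ‖x‖ from innerSL_apply_norm ℝ x]
        gcongr
        exact norm_innerSL_le ℝ
    _ = _ := by simp only [norm_mul, norm_eq_abs, abs_two, abs_of_pos (four_pos : (0:ℝ) < 4)]; ring

end Radial

section Profile

variable {p : ℝ} {h : ℕ} {t : ℝ}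

theorem pow_pred_le_one_add_pow (h : ℕ) (ht : 0 ≤ t) : t ^ (h - 1) ≤ 1 + t ^ h := by
  rcases le_total t 1 with ht1 | ht1
  · linarith [pow_le_one₀ ht ht1 (n := h - 1), pow_nonneg ht h]
  · linarith [pow_le_pow_right₀ ht1 (Nat.sub_le h 1)]

theorem natCast_mul_pow_pred_mul_self (m : ℕ) (t : ℝ) :
    (m : ℝ) * (t ^ (m - 1) * t) = m * t ^ m := by
  rcases Nat.eq_zero_or_pos m with rfl | hm
  · simp
  · rw [pow_sub_one_mul hm.ne']

noncomputable def oneAddPowRpowDeriv (p : ℝ) (h : ℕ) (t : ℝ) : ℝ :=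
  p * (h * t ^ (h - 1)) * (1 + t ^ h) ^ (p - 1)

noncomputable def oneAddPowRpowDeriv2 (p : ℝ) (h : ℕ) (t : ℝ) : ℝ :=
  p * (h * ((p - 1) * (h * t ^ (h - 1) * t ^ (h - 1)) * (1 + t ^ h) ^ (p - 2)
    + ((h - 1 : ℕ) * t ^ (h - 1 - 1)) * (1 + t ^ h) ^ (p - 1)))

theorem hasDerivAt_one_add_pow_rpow (ht : 0 ≤ t) :
    HasDerivAt (fun s => (1 + s ^ h) ^ p) (oneAddPowRpowDeriv p h t) t := by
  have hu : 1 + t ^ h ≠ 0 := by positivity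
  refine ((hasDerivAt_pow h t).const_add 1 |>.rpow_const (Or.inl hu)).congr_deriv ?_
  rw [oneAddPowRpowDeriv]; ring

theorem hasDerivAt_oneAddPowRpowDeriv (ht : 0 ≤ t) :
    HasDerivAt (oneAddPowRpowDeriv p h) (oneAddPowRpowDeriv2 p h t) t := by
  have hu : 1 + t ^ h ≠ 0 := by positivity
  have hpow := (hasDerivAt_pow (h - 1) t).const_mul (h : ℝ)
  have hrpow := (hasDerivAt_pow h t).const_add 1 |>.rpow_const (p := p - 1) (Or.inl hu)
  refine ((hpow.const_mul p).mul hrpow).congr_deriv ?_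
  rw [oneAddPowRpowDeriv2, show p - 2 = p - 1 - 1 by ring]; ring

theorem abs_oneAddPowRpowDeriv_le (ht : 0 ≤ t) :
    |oneAddPowRpowDeriv p h t| ≤ |p| * h * (1 + t ^ h) ^ p := by
  have hu : 0 < 1 + t ^ h := by positivity
  calc |oneAddPowRpowDeriv p h t| = |p| * (h * t ^ (h - 1)) * (1 + t ^ h) ^ (p - 1) := by
        rw [oneAddPowRpowDeriv, abs_mul, abs_mul,
          abs_of_nonneg (by positivity : (0:ℝ) ≤ h * t ^ (h - 1)), abs_of_pos (rpow_pos_of_pos hu _)]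
    _ ≤ |p| * (h * (1 + t ^ h)) * (1 + t ^ h) ^ (p - 1) := by
        gcongr; exact pow_pred_le_one_add_pow h ht
    _ = |p| * h * (1 + t ^ h) ^ p := by
        rw [rpow_sub_one hu.ne']; field_simp

theorem abs_oneAddPowRpowDeriv2_mul_le (ht : 0 ≤ t) :
    |oneAddPowRpowDeriv2 p h t| * t ≤ |p| * h * (|p - 1| * h + (h - 1 : ℕ)) * (1 + t ^ h) ^ p := by
  have hu : 0 < 1 + t ^ h := by positivity
  set u := 1 + t ^ h
  calc |oneAddPowRpowDeriv2 p h t| * t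
      ≤ |p| * (h * (|p - 1| * (h * t ^ (h - 1) * t ^ (h - 1)) * u ^ (p - 2)
          + ((h - 1 : ℕ) * t ^ (h - 1 - 1)) * u ^ (p - 1))) * t := by
        rw [oneAddPowRpowDeriv2, abs_mul, abs_mul, Nat.abs_cast]
        gcongr
        refine (abs_add_le _ _).trans_eq ?_
        rw [abs_of_nonneg (by positivity : (0:ℝ) ≤ (h - 1 : ℕ) * t ^ (h - 1 - 1) * u ^ (p - 1)),
          abs_mul, abs_mul, abs_of_nonneg (by positivity : (0:ℝ) ≤ h * t ^ (h - 1) * t ^ (h - 1)),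
          abs_of_pos (rpow_pos_of_pos hu _)]
    _ = |p| * (|p - 1| * (h * (t ^ (h - 1) * t)) * (h * t ^ (h - 1)) * u ^ (p - 2)
          + h * ((h - 1 : ℕ) * (t ^ (h - 1 - 1) * t)) * u ^ (p - 1)) := by ring
    _ = |p| * (|p - 1| * (h * t ^ h) * (h * t ^ (h - 1)) * u ^ (p - 2)
          + h * ((h - 1 : ℕ) * t ^ (h - 1)) * u ^ (p - 1)) := by
        rw [natCast_mul_pow_pred_mul_self, natCast_mul_pow_pred_mul_self]
    _ ≤ |p| * (|p - 1| * (h * u) * (h * u) * u ^ (p - 2)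
          + h * ((h - 1 : ℕ) * u) * u ^ (p - 1)) := by
        have := pow_pred_le_one_add_pow h ht
        gcongr
        linarith [pow_nonneg ht (h - 1)]
    _ = |p| * h * (|p - 1| * h + (h - 1 : ℕ)) * u ^ p := by
        rw [show p - 2 = p - 1 - 1 by ring, rpow_sub_one hu.ne', rpow_sub_one hu.ne']
        field_simp

end Profile

theorem stmt_5_general (n : ℕ) (lam : ℝ) (hlam : lam ∈ Set.Ioo (0 : ℝ) 1)
    (kap : ℕ) (hkap : 2 ≤ kap) (hke : Even kap) :
    ContDiff ℝ 2 (weight n lam kap) ∧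
    ∃ C > 0, ∀ x : EuclideanSpace ℝ (Fin n),
      ‖iteratedFDeriv ℝ 2 (weight n lam kap) x‖ ≤ C * weight n lam kap x := by
  obtain ⟨h, rfl⟩ := hke
  set p := -(lam / ((h + h : ℕ) : ℝ))
  have hh : 0 < h := by omega
  have hp : p ≠ 0 := neg_ne_zero.2 (div_pos hlam.1 (by positivity)).ne'
  have hw : weight n lam (h + h) = fun x => (1 + (‖x‖ ^ 2) ^ h) ^ p := by
    funext x
    rw [weight, ← pow_mul, two_mul]
  simp only [hw]
  refine ⟨(contDiff_const.add ((contDiff_norm_sq ℝ).pow h)).rpow_const_of_ne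
    fun x => by positivity, ?_⟩
  refine ⟨2 * (|p| * h) + 4 * (|p| * h * (|p - 1| * h + (h - 1 : ℕ))), by positivity, fun x => ?_⟩
  have hx : 0 ≤ ‖x‖ ^ 2 := sq_nonneg _
  have h1 := abs_oneAddPowRpowDeriv_le (p := p) (h := h) hx
  have h2 := abs_oneAddPowRpowDeriv2_mul_le (p := p) (h := h) hx
  calc _ ≤ 2 * |oneAddPowRpowDeriv p h (‖x‖ ^ 2)|
        + 4 * |oneAddPowRpowDeriv2 p h (‖x‖ ^ 2)| * ‖x‖ ^ 2 :=
        norm_iteratedFDeriv_two_comp_norm_sq_le (fun _ ht => hasDerivAt_one_add_pow_rpow ht)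
          (fun _ ht => hasDerivAt_oneAddPowRpowDeriv ht) x
    _ ≤ _ := by linarith

theorem stmt_5 (n : ℕ) (hn : 1 ≤ n) (lam : ℝ) (hlam : lam ∈ Set.Ioo (0 : ℝ) 1)
    (kap : ℕ) (hkap : 2 ≤ kap) (hke : Even kap) :
    ContDiff ℝ 2 (weight n lam kap) ∧
    ∃ C > 0, ∀ x : EuclideanSpace ℝ (Fin n),
      ‖iteratedFDeriv ℝ 2 (weight n lam kap) x‖ ≤ C * weight n lam kap x :=
  stmt_5_general n lam hlam kap hkap hke
end

section
/- (Pointwise domination of the commutator kernel.) Let n ≥ 1 be an integer, α ∈ (0,2), λ ∈ (0,1), and κ ≥ 2 an even integer, and let w = w_{λ,κ}. Then there exists a constant C = C(n,λ,κ) > 0 such that for every measurable function f : ℝⁿ → ℝ and every x ∈ ℝⁿ, ∫_{ℝⁿ} |w(x) − w(y)| · |f(y)| / |x−y|^{n+α/2} dy ≤ C · √(w(x)) · ∫_{ℝⁿ} min( |x−y|^{−(n−1+α/2)}, |x−y|^{−(n−λ/2+α/2)} ) · √(w(y)) · |f(y)| dy, where both sides are allowed to be +∞. -/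
/-
With `g(r) = 1 + r^κ` one has `√w(x) = g(|x|)^(-λ/(2κ))`, and the claim follows by dividing and
integrating the pointwise bound `|w(x) - w(y)| ≤ C √w(x) √w(y) min(t, t^(λ/2))`, `t = |x - y|`.
As `w(x) - w(y) = a² - b²` for `a = √w(x)`, `b = √w(y)`, this holds once each of `a, b` is at most
the other times `1 + C min(t, t^(λ/2))`, i.e. once `(g(r)/g(s))^(λ/(2κ)) ≤ 1 + C min(t, t^(λ/2))`
whenever `|r - s| ≤ t`. For `t ≤ 1` this comes from `|r^κ - s^κ| ≤ κ |r - s| max(r, s)^(κ-1)` and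
Bernoulli's inequality, for `t ≥ 1` from the Peetre-type bound `g(r) ≤ 2^κ g(s) g(t)`, `r ≤ s + t`.
-/

open Real MeasureTheory

lemma one_add_pow_le_of_le_add {r s t : ℝ} (κ : ℕ) (hr : 0 ≤ r) (hs : 0 ≤ s) (ht : 0 ≤ t)
    (h : r ≤ s + t) : 1 + r ^ κ ≤ 2 ^ κ * (1 + s ^ κ) * (1 + t ^ κ) := by
  have hpow : r ^ κ ≤ 2 ^ κ * (s ^ κ + t ^ κ) :=
    calc r ^ κ ≤ (s + t) ^ κ := pow_le_pow_left₀ hr h κ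
      _ ≤ 2 ^ (κ - 1) * (s ^ κ + t ^ κ) := add_pow_le hs ht κ
      _ ≤ 2 ^ κ * (s ^ κ + t ^ κ) := by gcongr <;> [norm_num; omega]
  have h2 : (1 : ℝ) ≤ 2 ^ κ := one_le_pow₀ one_le_two
  nlinarith [mul_nonneg (pow_nonneg hs κ) (pow_nonneg ht κ)]

lemma pow_pred_le_one_add_pow_s9 {a : ℝ} (ha : 0 ≤ a) (κ : ℕ) : a ^ (κ - 1) ≤ 1 + a ^ κ := by
  rcases le_total a 1 with h | h
  · linarith [pow_le_one₀ ha h (n := κ - 1), pow_nonneg ha κ]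
  · linarith [pow_le_pow_right₀ h (Nat.sub_le κ 1)]

lemma one_add_pow_le_mul_of_abs_sub_le_of_le_one {r s t : ℝ} (κ : ℕ) (hr : 0 ≤ r) (hs : 0 ≤ s)
    (hrs : |r - s| ≤ t) (ht1 : t ≤ 1) :
    1 + r ^ κ ≤ (1 + s ^ κ) * (1 + κ * 2 ^ (κ + 1) * t) := by
  have ht : 0 ≤ t := (abs_nonneg _).trans hrs
  have hM : max r s ≤ s + t := max_le (by linarith [le_abs_self (r - s)]) (by linarith)
  have hMpow : max r s ^ (κ - 1) ≤ 2 ^ (κ + 1) * (1 + s ^ κ) :=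
    calc max r s ^ (κ - 1) ≤ 1 + max r s ^ κ :=
          pow_pred_le_one_add_pow_s9 (hr.trans (le_max_left r s)) κ
      _ ≤ 2 ^ κ * (1 + s ^ κ) * (1 + t ^ κ) :=
          one_add_pow_le_of_le_add κ (hr.trans (le_max_left r s)) hs ht hM
      _ ≤ 2 ^ κ * (1 + s ^ κ) * 2 := by gcongr; linarith [pow_le_one₀ ht ht1 (n := κ)]
      _ = 2 ^ (κ + 1) * (1 + s ^ κ) := by ring
  have hdiff : r ^ κ - s ^ κ ≤ t * κ * (2 ^ (κ + 1) * (1 + s ^ κ)) :=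
    calc r ^ κ - s ^ κ ≤ |r ^ κ - s ^ κ| := le_abs_self _
      _ ≤ |r - s| * κ * max |r| |s| ^ (κ - 1) := abs_pow_sub_pow_le r s κ
      _ = |r - s| * κ * max r s ^ (κ - 1) := by rw [abs_of_nonneg hr, abs_of_nonneg hs]
      _ ≤ t * κ * (2 ^ (κ + 1) * (1 + s ^ κ)) := by gcongr
  linarith

lemma one_add_pow_le_mul_of_le_add_of_one_le {r s t : ℝ} (κ : ℕ) (hr : 0 ≤ r) (hs : 0 ≤ s)
    (h : r ≤ s + t) (ht1 : 1 ≤ t) : 1 + r ^ κ ≤ (1 + s ^ κ) * (2 ^ (κ + 1) * t ^ κ) :=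
  calc 1 + r ^ κ ≤ 2 ^ κ * (1 + s ^ κ) * (1 + t ^ κ) :=
        one_add_pow_le_of_le_add κ hr hs (by linarith) h
    _ ≤ 2 ^ κ * (1 + s ^ κ) * (2 * t ^ κ) := by gcongr; linarith [one_le_pow₀ ht1 (n := κ)]
    _ = (1 + s ^ κ) * (2 ^ (κ + 1) * t ^ κ) := by ring

lemma one_add_pow_rpow_le {r s t q : ℝ} {κ : ℕ} (hκ : 1 ≤ κ) (hq : 0 ≤ q) (hκq : κ * q ≤ 1)
    (hr : 0 ≤ r) (hs : 0 ≤ s) (hrs : |r - s| ≤ t) :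
    (1 + r ^ κ) ^ q ≤ (1 + s ^ κ) ^ q * (1 + κ * 2 ^ (κ + 1) * min t (t ^ (κ * q))) := by
  have ht : 0 ≤ t := (abs_nonneg _).trans hrs
  have hq1 : q ≤ 1 := by
    have : (1 : ℝ) ≤ κ := by exact_mod_cast hκ
    nlinarith
  rcases le_total t 1 with ht1 | ht1
  · have hmin : min t (t ^ (κ * q)) = t := min_eq_left <| by
      simpa using rpow_le_rpow_of_exponent_ge' ht ht1 (by positivity) hκq
    rw [hmin]
    calc (1 + r ^ κ) ^ q ≤ ((1 + s ^ κ) * (1 + κ * 2 ^ (κ + 1) * t)) ^ q :=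
          rpow_le_rpow (by positivity)
            (one_add_pow_le_mul_of_abs_sub_le_of_le_one κ hr hs hrs ht1) hq
      _ = (1 + s ^ κ) ^ q * (1 + κ * 2 ^ (κ + 1) * t) ^ q :=
          mul_rpow (by positivity) (by positivity)
      _ ≤ (1 + s ^ κ) ^ q * (1 + q * (κ * 2 ^ (κ + 1) * t)) := by
          gcongr
          have : 0 ≤ κ * 2 ^ (κ + 1) * t := by positivity
          exact rpow_one_add_le_one_add_mul_self (by linarith) hq hq1
      _ ≤ (1 + s ^ κ) ^ q * (1 + κ * 2 ^ (κ + 1) * t) := by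
          gcongr (1 + s ^ κ) ^ q * (1 + ?_)
          exact mul_le_of_le_one_left (by positivity) hq1
  · have hmin : min t (t ^ (κ * q)) = t ^ (κ * q) := min_eq_right <| by
      simpa using rpow_le_rpow_of_exponent_le ht1 hκq
    rw [hmin]
    calc (1 + r ^ κ) ^ q ≤ ((1 + s ^ κ) * (2 ^ (κ + 1) * t ^ κ)) ^ q :=
          rpow_le_rpow (by positivity) (one_add_pow_le_mul_of_le_add_of_one_le κ hr hs
            (by linarith [le_abs_self (r - s)]) ht1) hq
      _ = (1 + s ^ κ) ^ q * ((2 ^ (κ + 1)) ^ q * t ^ (κ * q)) := by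
          rw [mul_rpow (by positivity) (by positivity), mul_rpow (by positivity) (by positivity),
            ← rpow_natCast t κ, ← rpow_mul ht]
      _ ≤ (1 + s ^ κ) ^ q * (1 + κ * 2 ^ (κ + 1) * t ^ (κ * q)) := by
          gcongr (1 + s ^ κ) ^ q * ?_
          have hκ' : (1 : ℝ) ≤ κ := by exact_mod_cast hκ
          calc (2 ^ (κ + 1)) ^ q * t ^ (κ * q) ≤ 2 ^ (κ + 1) * t ^ (κ * q) := by
                gcongr; exact rpow_le_self_of_one_le (one_le_pow₀ one_le_two) hq1
            _ ≤ 1 + κ * 2 ^ (κ + 1) * t ^ (κ * q) := by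
                have := mul_le_mul_of_nonneg_right hκ'
                  (by positivity : (0 : ℝ) ≤ 2 ^ (κ + 1) * t ^ (κ * q))
                linarith

lemma abs_sq_sub_sq_le_of_le_mul {a b ε : ℝ} (ha : 0 ≤ a) (hb : 0 ≤ b) (hε : 0 ≤ ε)
    (hab : a ≤ b * (1 + ε)) (hba : b ≤ a * (1 + ε)) : |a ^ 2 - b ^ 2| ≤ 2 * ε * a * b := by
  rcases le_total a b with h | h
  · rw [abs_of_nonpos (by nlinarith)]; nlinarith
  · rw [abs_of_nonneg (by nlinarith)]; nlinarith

lemma min_rpow_div_rpow {t : ℝ} (ht : 0 < t) (a b : ℝ) :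
    min t (t ^ a) / t ^ b = min (t ^ (1 - b)) (t ^ (a - b)) := by
  rw [rpow_sub ht, rpow_sub ht, rpow_one, min_div_div_right (rpow_nonneg ht.le b)]

section weight

variable {n : ℕ} {lam : ℝ} {kap : ℕ}

lemma weight_nonneg (x : EuclideanSpace ℝ (Fin n)) : 0 ≤ weight n lam kap x :=
  rpow_nonneg (by positivity) _

lemma sqrt_weight_eq (x : EuclideanSpace ℝ (Fin n)) :
    √(weight n lam kap x) = ((1 + ‖x‖ ^ kap) ^ (lam / kap / 2))⁻¹ := by
  rw [weight, sqrt_eq_rpow, ← rpow_mul (by positivity), ← rpow_neg (by positivity)]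
  ring_nf

lemma sqrt_weight_le_mul (hlam0 : 0 ≤ lam) (hlam2 : lam ≤ 2) (hkap : 1 ≤ kap)
    (x y : EuclideanSpace ℝ (Fin n)) :
    √(weight n lam kap x) ≤ √(weight n lam kap y) *
      (1 + kap * 2 ^ (kap + 1) * min ‖x - y‖ (‖x - y‖ ^ (lam / 2))) := by
  have hkq : (kap : ℝ) * (lam / kap / 2) = lam / 2 := by
    have : (kap : ℝ) ≠ 0 := by positivity
    field_simp
  have key := one_add_pow_rpow_le (q := lam / kap / 2) hkap (by positivity) (by linarith)
    (norm_nonneg y) (norm_nonneg x) ((abs_norm_sub_norm_le y x).trans_eq (norm_sub_rev y x))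
  rw [sqrt_weight_eq, sqrt_weight_eq, inv_mul_eq_div, le_div_iff₀ (by positivity),
    inv_mul_le_iff₀ (by positivity)]
  rwa [hkq] at key

lemma abs_weight_sub_weight_le (hlam0 : 0 ≤ lam) (hlam2 : lam ≤ 2) (hkap : 1 ≤ kap)
    (x y : EuclideanSpace ℝ (Fin n)) :
    |weight n lam kap x - weight n lam kap y| ≤
      kap * 2 ^ (kap + 2) * √(weight n lam kap x) * √(weight n lam kap y) *
        min ‖x - y‖ (‖x - y‖ ^ (lam / 2)) := by
  have hxy := sqrt_weight_le_mul hlam0 hlam2 hkap x y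
  have hyx := sqrt_weight_le_mul hlam0 hlam2 hkap y x
  rw [norm_sub_rev y x] at hyx
  calc |weight n lam kap x - weight n lam kap y|
      = |√(weight n lam kap x) ^ 2 - √(weight n lam kap y) ^ 2| := by
        rw [sq_sqrt (weight_nonneg x), sq_sqrt (weight_nonneg y)]
    _ ≤ 2 * (kap * 2 ^ (kap + 1) * min ‖x - y‖ (‖x - y‖ ^ (lam / 2))) *
          √(weight n lam kap x) * √(weight n lam kap y) :=
        abs_sq_sub_sq_le_of_le_mul (sqrt_nonneg _) (sqrt_nonneg _) (by positivity) hxy hyx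
    _ = _ := by ring

lemma abs_weight_sub_weight_mul_div_le (hlam0 : 0 ≤ lam) (hlam2 : lam ≤ 2) (hkap : 1 ≤ kap)
    {c : ℝ} (hc : 0 ≤ c) (b : ℝ) (x y : EuclideanSpace ℝ (Fin n)) :
    |weight n lam kap x - weight n lam kap y| * c / ‖x - y‖ ^ b ≤
      kap * 2 ^ (kap + 2) * √(weight n lam kap x) *
        (min (‖x - y‖ ^ (1 - b)) (‖x - y‖ ^ (lam / 2 - b)) * √(weight n lam kap y) * c) := by
  rcases eq_or_ne x y with rfl | hxy
  · rw [sub_self, abs_zero, zero_mul, zero_div]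
    positivity
  have ht : 0 < ‖x - y‖ := norm_pos_iff.mpr (sub_ne_zero.mpr hxy)
  calc _ ≤ kap * 2 ^ (kap + 2) * √(weight n lam kap x) * √(weight n lam kap y) *
        min ‖x - y‖ (‖x - y‖ ^ (lam / 2)) * c / ‖x - y‖ ^ b := by
        gcongr
        exact abs_weight_sub_weight_le hlam0 hlam2 hkap x y
    _ = kap * 2 ^ (kap + 2) * √(weight n lam kap x) *
        (min ‖x - y‖ (‖x - y‖ ^ (lam / 2)) / ‖x - y‖ ^ b * √(weight n lam kap y) * c) := by ring
    _ = _ := by rw [min_rpow_div_rpow ht]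

end weight

theorem stmt_9_general (n : ℕ) (α : ℝ)
    (lam : ℝ) (hlam : lam ∈ Set.Ioo (0 : ℝ) 1)
    (kap : ℕ) (hkap : 2 ≤ kap) :
    ∃ C > 0, ∀ f : EuclideanSpace ℝ (Fin n) → ℝ, Measurable f →
      ∀ x : EuclideanSpace ℝ (Fin n),
      (∫⁻ y, ENNReal.ofReal
          (|weight n lam kap x - weight n lam kap y| * |f y| / ‖x - y‖ ^ ((n : ℝ) + α / 2))) ≤
        ENNReal.ofReal (C * Real.sqrt (weight n lam kap x)) *
          ∫⁻ y, ENNReal.ofReal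
            (min (‖x - y‖ ^ (-((n : ℝ) - 1 + α / 2))) (‖x - y‖ ^ (-((n : ℝ) - lam / 2 + α / 2))) *
              Real.sqrt (weight n lam kap y) * |f y|) := by
  refine ⟨kap * 2 ^ (kap + 2), by positivity, fun f _ x => ?_⟩
  have hexp₁ : -((n : ℝ) - 1 + α / 2) = 1 - (n + α / 2) := by ring
  have hexp₂ : -((n : ℝ) - lam / 2 + α / 2) = lam / 2 - (n + α / 2) := by ring
  rw [hexp₁, hexp₂, ← lintegral_const_mul' _ _ ENNReal.ofReal_ne_top]
  refine lintegral_mono fun y => ?_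
  rw [← ENNReal.ofReal_mul (by positivity)]
  exact ENNReal.ofReal_le_ofReal <| abs_weight_sub_weight_mul_div_le hlam.1.le
    (by linarith [hlam.2]) (by omega) (abs_nonneg (f y)) _ x y

theorem stmt_9 (n : ℕ) (hn : 1 ≤ n) (α : ℝ) (hα : α ∈ Set.Ioo (0 : ℝ) 2)
    (lam : ℝ) (hlam : lam ∈ Set.Ioo (0 : ℝ) 1)
    (kap : ℕ) (hkap : 2 ≤ kap) (hke : Even kap) :
    ∃ C > 0, ∀ f : EuclideanSpace ℝ (Fin n) → ℝ, Measurable f →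
      ∀ x : EuclideanSpace ℝ (Fin n),
      (∫⁻ y, ENNReal.ofReal
          (|weight n lam kap x - weight n lam kap y| * |f y| / ‖x - y‖ ^ ((n : ℝ) + α / 2))) ≤
        ENNReal.ofReal (C * Real.sqrt (weight n lam kap x)) *
          ∫⁻ y, ENNReal.ofReal
            (min (‖x - y‖ ^ (-((n : ℝ) - 1 + α / 2))) (‖x - y‖ ^ (-((n : ℝ) - lam / 2 + α / 2))) *
              Real.sqrt (weight n lam kap y) * |f y|) :=
  stmt_9_general n α lam hlam kap hkap
end

section
/- (Near-diagonal second-difference bound.) Let n ≥ 1 be an integer, α ∈ (0,2), λ ∈ (0,1), and κ ≥ 2 an even integer, and let w = w_{λ,κ}. Then there exists a constant C = C(n,α,λ,κ) > 0 such that for all x ∈ ℝⁿ, ∫_{|y| ≤ 1} |2 w(x) − w(x+y) − w(x−y)| / |y|^{n+α} dy ≤ C · w(x). -/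
/-!
Along the line `t ↦ x + t • y` the weight is `h t = (1 + q t ^ m) ^ (-μ)` with
`q t = ‖x + t • y‖ ^ 2`, `κ = 2 m` and `μ = λ / κ`, and the second difference is
`h 1 + h (-1) - 2 h 0`, which two applications of the mean value theorem bound by
`2 sup_{[-1,1]} |h''|`. Cauchy–Schwarz gives `(q')² ≤ 4 q ‖y‖²`, so every derivative of `q ^ m`
costs a factor `‖y‖` against `1 + q ^ m`; hence `|h''| ≲ ‖y‖² h`, and `h t ≲ w x` for `|t| ≤ 1`.
The integrand is therefore `≲ w x · ‖y‖ ^ (2 - n - α)`, integrable on the unit ball as `α < 2`.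
-/

open Real MeasureTheory

-- The factor `k` makes the truncated exponent `k - 1` harmless at `k = 0`; this is what lets the
-- derivatives of `s ^ m` produced by `HasDerivAt.pow` be bounded without splitting off `m ≤ 1`.
lemma natCast_mul_pow_sub_one_mul (k : ℕ) (s : ℝ) : (k : ℝ) * s ^ (k - 1) * s = k * s ^ k := by
  rcases k.eq_zero_or_pos with rfl | hk
  · simp
  · rw [mul_assoc, pow_sub_one_mul hk.ne']

lemma pow_le_one_add_pow {s : ℝ} (hs : 0 ≤ s) {j k : ℕ} (h : j ≤ k) : s ^ j ≤ 1 + s ^ k := by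
  rcases le_total s 1 with h1 | h1
  · linarith [pow_le_one₀ hs h1 (n := j), pow_nonneg hs k]
  · linarith [pow_le_pow_right₀ h1 h]

lemma sq_deriv_pow_comp_le {s c d : ℝ} (hs : 0 ≤ s) (hc : 0 ≤ c)
    (hd : d ^ 2 ≤ 4 * s * c) (m : ℕ) :
    (m * s ^ (m - 1) * d) ^ 2 ≤ 4 * m ^ 2 * c * (1 + s ^ m) ^ 2 := by
  have h₁ : (m : ℝ) * s ^ (m - 1) ≤ m * (1 + s ^ m) := by
    gcongr; exact pow_le_one_add_pow hs (m.sub_le 1)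
  have h₂ : (m : ℝ) * s ^ m ≤ m * (1 + s ^ m) := by gcongr; linarith
  calc (m * s ^ (m - 1) * d) ^ 2 = (m * s ^ (m - 1)) ^ 2 * d ^ 2 := by ring
    _ ≤ (m * s ^ (m - 1)) ^ 2 * (4 * s * c) := by gcongr
    _ = 4 * c * (m * s ^ (m - 1)) * (m * s ^ (m - 1) * s) := by ring
    _ = 4 * c * (m * s ^ (m - 1)) * (m * s ^ m) := by rw [natCast_mul_pow_sub_one_mul]
    _ ≤ 4 * c * (m * (1 + s ^ m)) * (m * (1 + s ^ m)) := by gcongr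
    _ = 4 * m ^ 2 * c * (1 + s ^ m) ^ 2 := by ring

lemma abs_second_deriv_pow_comp_le {s c d : ℝ} (hs : 0 ≤ s) (hc : 0 ≤ c)
    (hd : d ^ 2 ≤ 4 * s * c) (m : ℕ) :
    |m * ((m - 1 : ℕ) * s ^ (m - 1 - 1) * d * d + s ^ (m - 1) * (2 * c))|
      ≤ (4 * m ^ 2 + 2 * m) * c * (1 + s ^ m) := by
  have hpow : s ^ (m - 1) ≤ 1 + s ^ m := pow_le_one_add_pow hs (m.sub_le 1)
  have hcoef : ((m - 1 : ℕ) : ℝ) ≤ m := by exact_mod_cast m.sub_le 1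
  have h₁ : ((m - 1 : ℕ) : ℝ) * s ^ (m - 1 - 1) * d * d ≤ 4 * c * m * (1 + s ^ m) :=
    calc ((m - 1 : ℕ) : ℝ) * s ^ (m - 1 - 1) * d * d
        = ((m - 1 : ℕ) : ℝ) * s ^ (m - 1 - 1) * d ^ 2 := by ring
      _ ≤ ((m - 1 : ℕ) : ℝ) * s ^ (m - 1 - 1) * (4 * s * c) := by gcongr
      _ = 4 * c * (((m - 1 : ℕ) : ℝ) * s ^ (m - 1 - 1) * s) := by ring
      _ = 4 * c * ((m - 1 : ℕ) * s ^ (m - 1)) := by rw [natCast_mul_pow_sub_one_mul]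
      _ ≤ 4 * c * (m * (1 + s ^ m)) := by gcongr
      _ = 4 * c * m * (1 + s ^ m) := by ring
  have h₂ : s ^ (m - 1) * (2 * c) ≤ 2 * c * (1 + s ^ m) := by nlinarith
  have h₀ : 0 ≤ ((m - 1 : ℕ) : ℝ) * s ^ (m - 1 - 1) * d * d := by
    rw [mul_assoc]; exact mul_nonneg (by positivity) (mul_self_nonneg d)
  rw [abs_of_nonneg (mul_nonneg (Nat.cast_nonneg m) (add_nonneg h₀ (by positivity)))]
  nlinarith [(Nat.cast_nonneg m : (0 : ℝ) ≤ m)]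

lemma abs_second_deriv_rpow_neg_le {U u₁ u₂ c A B μ : ℝ} (hU : 1 ≤ U) (hμ : 0 ≤ μ)
    (h₁ : u₁ ^ 2 ≤ A * c * U ^ 2) (h₂ : |u₂| ≤ B * c * U) :
    |μ * (μ + 1) * U ^ (-μ - 2) * u₁ ^ 2 - μ * U ^ (-μ - 1) * u₂|
      ≤ (μ * (μ + 1) * A + μ * B) * c * U ^ (-μ) := by
  have hU0 : 0 < U := one_pos.trans_le hU
  have e₂ : U ^ (-μ - 2) * U ^ 2 = U ^ (-μ) := by
    rw [← rpow_natCast, ← rpow_add hU0]; norm_num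
  have e₁ : U ^ (-μ - 1) * U = U ^ (-μ) := by
    rw [← rpow_add_one hU0.ne']; norm_num
  calc |μ * (μ + 1) * U ^ (-μ - 2) * u₁ ^ 2 - μ * U ^ (-μ - 1) * u₂|
      ≤ μ * (μ + 1) * U ^ (-μ - 2) * u₁ ^ 2 + μ * U ^ (-μ - 1) * |u₂| := by
        refine (abs_sub _ _).trans_eq ?_
        rw [abs_of_nonneg (by positivity), abs_mul, abs_of_nonneg (by positivity)]
    _ ≤ μ * (μ + 1) * U ^ (-μ - 2) * (A * c * U ^ 2) + μ * U ^ (-μ - 1) * (B * c * U) := by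
        gcongr
    _ = μ * (μ + 1) * A * c * (U ^ (-μ - 2) * U ^ 2) + μ * B * c * (U ^ (-μ - 1) * U) := by
        ring
    _ = (μ * (μ + 1) * A + μ * B) * c * U ^ (-μ) := by
        rw [e₁, e₂]; ring

lemma hasDerivAt_deriv_one_add_rpow_neg {u u₁ u₂ : ℝ → ℝ} {μ t : ℝ} (hu₀ : 0 ≤ u t)
    (hu : HasDerivAt u (u₁ t) t) (hu₁ : HasDerivAt u₁ (u₂ t) t) :
    HasDerivAt (fun t => u₁ t * -μ * (1 + u t) ^ (-μ - 1))
      (μ * (μ + 1) * (1 + u t) ^ (-μ - 2) * u₁ t ^ 2 - μ * (1 + u t) ^ (-μ - 1) * u₂ t) t := by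
  have h := (hu₁.mul_const (-μ)).fun_mul
    ((hu.const_add 1).rpow_const (p := -μ - 1) (Or.inl (by positivity)))
  refine h.congr_deriv ?_
  rw [show -μ - 1 - 1 = -μ - 2 by ring]
  ring

lemma abs_add_sub_two_mul_le_of_hasDerivAt {f f' f'' : ℝ → ℝ} {M : ℝ}
    (hf : ∀ t, HasDerivAt f (f' t) t) (hf' : ∀ t, HasDerivAt f' (f'' t) t)
    (hM : ∀ t ∈ Set.Icc (-1 : ℝ) 1, |f'' t| ≤ M) :
    |f 1 + f (-1) - 2 * f 0| ≤ 2 * M := by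
  have hφ : ∀ t, HasDerivAt (fun t => f t + f (-t)) (f' t - f' (-t)) t := fun t => by
    have h := (hf t).add ((hf (-t)).comp t (hasDerivAt_neg t))
    rw [mul_neg_one, ← sub_eq_add_neg] at h
    exact h
  have hφ' : ∀ t ∈ Set.Icc (0 : ℝ) 1, ‖f' t - f' (-t)‖ ≤ 2 * M := fun t ht => by
    have h := (convex_Icc (-1 : ℝ) 1).norm_image_sub_le_of_norm_hasDerivWithin_le
      (fun s _ => (hf' s).hasDerivWithinAt) (fun s hs => (hM s hs).trans_eq' (norm_eq_abs _))
      (x := -t) (y := t) ⟨by linarith [ht.2], by linarith [ht.1]⟩ ⟨by linarith [ht.1], ht.2⟩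
    have hM0 : 0 ≤ M := (abs_nonneg _).trans (hM 0 ⟨by norm_num, by norm_num⟩)
    simp only [norm_eq_abs] at h ⊢
    rw [abs_of_nonneg (by linarith [ht.1] : 0 ≤ t - -t)] at h
    nlinarith [ht.2]
  have h := (convex_Icc (0 : ℝ) 1).norm_image_sub_le_of_norm_hasDerivWithin_le
    (fun s _ => (hφ s).hasDerivWithinAt) hφ' (x := 0) (y := 1) ⟨le_rfl, zero_le_one⟩
    ⟨zero_le_one, le_rfl⟩
  simp only [neg_zero, norm_eq_abs, sub_zero, abs_one, mul_one] at h
  convert h using 2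
  ring

lemma one_add_pow_le_two_pow_mul {a b : ℝ} (ha : 0 ≤ a) (hb : 0 ≤ b) (h : a ≤ b + 1) (k : ℕ) :
    1 + a ^ k ≤ 2 ^ (k + 1) * (1 + b ^ k) := by
  have h₁ : a ^ k ≤ 2 ^ (k - 1) * (b ^ k + 1 ^ k) :=
    (pow_le_pow_left₀ ha h k).trans (add_pow_le hb zero_le_one k)
  have h₂ : (2 : ℝ) ^ (k - 1) ≤ 2 ^ k := pow_le_pow_right₀ one_le_two (k.sub_le 1)
  have h₃ : (1 : ℝ) ≤ 2 ^ k := one_le_pow₀ one_le_two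
  have hbk : 0 ≤ b ^ k := pow_nonneg hb k
  rw [one_pow] at h₁
  rw [pow_succ]
  nlinarith

lemma one_add_norm_pow_rpow_neg_le {E : Type*} [SeminormedAddCommGroup E] {x z : E}
    (h : ‖z - x‖ ≤ 1) (k : ℕ) {μ : ℝ} (hμ : 0 ≤ μ) :
    (1 + ‖z‖ ^ k) ^ (-μ) ≤ (2 ^ (k + 1)) ^ μ * (1 + ‖x‖ ^ k) ^ (-μ) := by
  have hx : ‖x‖ ≤ ‖z‖ + 1 := by
    linarith [norm_sub_norm_le x z, norm_sub_rev x z]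
  have hle := one_add_pow_le_two_pow_mul (norm_nonneg x) (norm_nonneg z) hx k
  calc (1 + ‖z‖ ^ k) ^ (-μ) ≤ ((1 + ‖x‖ ^ k) / 2 ^ (k + 1)) ^ (-μ) :=
        rpow_le_rpow_of_nonpos (by positivity) (div_le_of_le_mul₀ (by positivity)
          (by positivity) (by linarith)) (neg_nonpos.mpr hμ)
    _ = (2 ^ (k + 1)) ^ μ * (1 + ‖x‖ ^ k) ^ (-μ) := by
        rw [div_rpow (by positivity) (by positivity),
          rpow_neg (by positivity : (0 : ℝ) ≤ 2 ^ (k + 1)) μ, div_inv_eq_mul, mul_comm]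

section InnerProductSpace

variable {E : Type*} [NormedAddCommGroup E] [InnerProductSpace ℝ E]

lemma hasDerivAt_norm_add_smul_sq (x y : E) (t : ℝ) :
    HasDerivAt (fun t : ℝ => ‖x + t • y‖ ^ 2) (2 * inner ℝ (x + t • y) y) t := by
  simpa using (((hasDerivAt_id t).smul_const y).const_add x).norm_sq

lemma hasDerivAt_two_mul_inner_add_smul (x y : E) (t : ℝ) :
    HasDerivAt (fun t : ℝ => 2 * inner ℝ (x + t • y) y) (2 * ‖y‖ ^ 2) t := by
  have h := ((((hasDerivAt_id t).smul_const y).const_add x).inner ℝ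
    (hasDerivAt_const t y)).const_mul 2
  simpa [real_inner_self_eq_norm_sq] using h

lemma exists_derivs_norm_add_smul_pow_le (x y : E) (m : ℕ) :
    ∃ u₁ u₂ : ℝ → ℝ, (∀ t, HasDerivAt (fun t : ℝ => ‖x + t • y‖ ^ (2 * m)) (u₁ t) t) ∧
      (∀ t, HasDerivAt u₁ (u₂ t) t) ∧
      ∀ t, u₁ t ^ 2 ≤ 4 * m ^ 2 * ‖y‖ ^ 2 * (1 + ‖x + t • y‖ ^ (2 * m)) ^ 2 ∧
        |u₂ t| ≤ (4 * m ^ 2 + 2 * m) * ‖y‖ ^ 2 * (1 + ‖x + t • y‖ ^ (2 * m)) := by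
  set q : ℝ → ℝ := fun t => ‖x + t • y‖ ^ 2
  set q₁ : ℝ → ℝ := fun t => 2 * inner ℝ (x + t • y) y
  have hq : ∀ t, HasDerivAt q (q₁ t) t := hasDerivAt_norm_add_smul_sq x y
  have hq₁ : ∀ t, HasDerivAt q₁ (2 * ‖y‖ ^ 2) t := hasDerivAt_two_mul_inner_add_smul x y
  have hq₀ : ∀ t, 0 ≤ q t := fun t => by positivity
  have hq₁_sq : ∀ t, q₁ t ^ 2 ≤ 4 * q t * ‖y‖ ^ 2 := fun t => by
    have h := real_inner_mul_inner_self_le (x + t • y) y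
    simp only [real_inner_self_eq_norm_sq] at h
    simp only [q₁, q]
    nlinarith
  have hpow : ∀ t, ‖x + t • y‖ ^ (2 * m) = q t ^ m := fun t => pow_mul _ 2 m
  refine ⟨fun t => m * q t ^ (m - 1) * q₁ t,
    fun t => m * ((m - 1 : ℕ) * q t ^ (m - 1 - 1) * q₁ t * q₁ t + q t ^ (m - 1) * (2 * ‖y‖ ^ 2)),
    fun t => ?_, fun t => ?_, fun t => ?_⟩
  · simpa only [hpow] using (hq t).fun_pow m
  · have h := (((hq t).fun_pow (m - 1)).fun_mul (hq₁ t)).const_mul (m : ℝ)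
    simp only [← mul_assoc] at h
    exact h.congr_deriv (by ring)
  · rw [hpow]
    exact ⟨sq_deriv_pow_comp_le (hq₀ t) (by positivity) (hq₁_sq t) m,
      abs_second_deriv_pow_comp_le (hq₀ t) (by positivity) (hq₁_sq t) m⟩

theorem exists_abs_second_difference_one_add_norm_pow_rpow_neg_le (m : ℕ) {μ : ℝ} (hμ : 0 ≤ μ) :
    ∃ K ≥ 0, ∀ x y : E, ‖y‖ ≤ 1 →
      |2 * (1 + ‖x‖ ^ (2 * m)) ^ (-μ) - (1 + ‖x + y‖ ^ (2 * m)) ^ (-μ)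
          - (1 + ‖x - y‖ ^ (2 * m)) ^ (-μ)|
        ≤ K * (1 + ‖x‖ ^ (2 * m)) ^ (-μ) * ‖y‖ ^ 2 := by
  set A : ℝ := μ * (μ + 1) * (4 * m ^ 2) + μ * (4 * m ^ 2 + 2 * m)
  refine ⟨2 * (A * (2 ^ (2 * m + 1)) ^ μ), by positivity, fun x y hy => ?_⟩
  obtain ⟨u₁, u₂, hu, hu₁, hbound⟩ := exists_derivs_norm_add_smul_pow_le x y m
  set u : ℝ → ℝ := fun t => ‖x + t • y‖ ^ (2 * m)
  set h : ℝ → ℝ := fun t => (1 + u t) ^ (-μ)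
  have hh : ∀ t, HasDerivAt h (u₁ t * -μ * (1 + u t) ^ (-μ - 1)) t := fun t =>
    ((hu t).const_add 1).rpow_const (Or.inl (by positivity))
  have hh' := fun t => hasDerivAt_deriv_one_add_rpow_neg (μ := μ) (u := u) (by positivity)
    (hu t) (hu₁ t)
  have hh'_le : ∀ t ∈ Set.Icc (-1 : ℝ) 1,
      |μ * (μ + 1) * (1 + u t) ^ (-μ - 2) * u₁ t ^ 2 - μ * (1 + u t) ^ (-μ - 1) * u₂ t|
        ≤ A * (2 ^ (2 * m + 1)) ^ μ * (1 + ‖x‖ ^ (2 * m)) ^ (-μ) * ‖y‖ ^ 2 := fun t ht => by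
    have hdist : ‖x + t • y - x‖ ≤ 1 := by
      rw [add_sub_cancel_left, norm_smul, norm_eq_abs]
      exact mul_le_one₀ (abs_le.mpr ht) (norm_nonneg y) hy
    calc _ ≤ A * ‖y‖ ^ 2 * (1 + u t) ^ (-μ) :=
          abs_second_deriv_rpow_neg_le (le_add_of_nonneg_right (by positivity)) hμ
            (hbound t).1 (hbound t).2
      _ ≤ A * ‖y‖ ^ 2 * ((2 ^ (2 * m + 1)) ^ μ * (1 + ‖x‖ ^ (2 * m)) ^ (-μ)) := by
          gcongr; exact one_add_norm_pow_rpow_neg_le hdist (2 * m) hμ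
      _ = _ := by ring
  calc _ = |h 1 + h (-1) - 2 * h 0| := by
        rw [← abs_neg]
        simp only [h, u, one_smul, neg_smul, ← sub_eq_add_neg, zero_smul, add_zero]
        ring_nf
    _ ≤ 2 * (A * (2 ^ (2 * m + 1)) ^ μ * (1 + ‖x‖ ^ (2 * m)) ^ (-μ) * ‖y‖ ^ 2) :=
        abs_add_sub_two_mul_le_of_hasDerivAt hh hh' hh'_le
    _ = _ := by ring

end InnerProductSpace

lemma lintegral_norm_sq_div_rpow_lt_top {E : Type*} [NormedAddCommGroup E] [NormedSpace ℝ E]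
    [FiniteDimensional ℝ E] [MeasurableSpace E] [BorelSpace E] {μ : Measure E}
    [μ.IsAddHaarMeasure] (hd : 1 ≤ Module.finrank ℝ E) {s : ℝ}
    (hs : s < Module.finrank ℝ E + 2) {K : Set E} (hK : IsCompact K) :
    ∫⁻ y in K, ENNReal.ofReal (‖y‖ ^ 2 / ‖y‖ ^ s) ∂μ < ⊤ := by
  have hdecay : ∀ y : E, ‖‖y‖ ^ 2 / ‖y‖ ^ s‖ ≤ 1 * ‖y‖ ^ (-(s - 2)) := fun y => by
    rw [norm_of_nonneg (by positivity), one_mul]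
    rcases (norm_nonneg y).eq_or_lt with hy | hy
    · rw [← hy, zero_pow two_ne_zero, zero_div]
      positivity
    · rw [← rpow_natCast, ← rpow_sub hy]; norm_num
  have hloc := locallyIntegrable_of_norm_le_rpow (μ := μ) hd (by linarith) (ae_of_all _ hdecay)
    ((continuous_norm.pow 2).measurable.div (measurable_norm.pow_const s)).aestronglyMeasurable
  exact (hloc.integrableOn_isCompact hK).lintegral_lt_top

theorem stmt_12_general (n : ℕ) (hn : 1 ≤ n) (α : ℝ) (hα : α ∈ Set.Ioo (0 : ℝ) 2)
    (lam : ℝ) (hlam : lam ∈ Set.Ioo (0 : ℝ) 1)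
    (kap : ℕ) (hke : Even kap) :
    ∃ C > 0, ∀ x : EuclideanSpace ℝ (Fin n),
      (∫⁻ y in {y : EuclideanSpace ℝ (Fin n) | ‖y‖ ≤ 1},
          ENNReal.ofReal
            (|2 * weight n lam kap x - weight n lam kap (x + y) - weight n lam kap (x - y)| /
              ‖y‖ ^ ((n : ℝ) + α))) ≤
        ENNReal.ofReal (C * weight n lam kap x) := by
  obtain ⟨m, hm⟩ := hke
  have hw : ∀ z, weight n lam kap z = (1 + ‖z‖ ^ (2 * m)) ^ (-(lam / kap)) := fun z => by
    rw [weight, hm, two_mul]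
  obtain ⟨K, hK₀, hK⟩ := exists_abs_second_difference_one_add_norm_pow_rpow_neg_le
    (E := EuclideanSpace ℝ (Fin n)) m (div_nonneg hlam.1.le kap.cast_nonneg)
  have hJ := lintegral_norm_sq_div_rpow_lt_top (μ := volume) (s := n + α)
    (by simpa using hn) (by simpa using hα.2)
    (isCompact_closedBall (0 : EuclideanSpace ℝ (Fin n)) 1)
  set B := Metric.closedBall (0 : EuclideanSpace ℝ (Fin n)) 1
  set J := ∫⁻ y in B, ENNReal.ofReal (‖y‖ ^ 2 / ‖y‖ ^ ((n : ℝ) + α))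
  refine ⟨K * J.toReal + 1, by positivity, fun x => ?_⟩
  have hwx : 0 ≤ weight n lam kap x := by rw [hw]; positivity
  have hball : {y : EuclideanSpace ℝ (Fin n) | ‖y‖ ≤ 1} = B := by
    ext y; simp [B]
  rw [hball]
  calc _ ≤ ∫⁻ y in B, ENNReal.ofReal (K * weight n lam kap x)
          * ENNReal.ofReal (‖y‖ ^ 2 / ‖y‖ ^ ((n : ℝ) + α)) := by
        refine setLIntegral_mono' Metric.isClosed_closedBall.measurableSet fun y hy => ?_
        rw [← ENNReal.ofReal_mul (by positivity), mul_div_assoc']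
        refine ENNReal.ofReal_le_ofReal (div_le_div_of_nonneg_right ?_ (by positivity))
        simpa only [hw] using hK x y (mem_closedBall_zero_iff.mp hy)
    _ = ENNReal.ofReal (K * weight n lam kap x * J.toReal) := by
        rw [lintegral_const_mul' _ _ ENNReal.ofReal_ne_top,
          ENNReal.ofReal_mul (p := K * weight n lam kap x) (by positivity),
          ENNReal.ofReal_toReal hJ.ne]
    _ ≤ ENNReal.ofReal ((K * J.toReal + 1) * weight n lam kap x) :=
        ENNReal.ofReal_le_ofReal (by nlinarith)

theorem stmt_12 (n : ℕ) (hn : 1 ≤ n) (α : ℝ) (hα : α ∈ Set.Ioo (0 : ℝ) 2)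
    (lam : ℝ) (hlam : lam ∈ Set.Ioo (0 : ℝ) 1)
    (kap : ℕ) (hkap : 2 ≤ kap) (hke : Even kap) :
    ∃ C > 0, ∀ x : EuclideanSpace ℝ (Fin n),
      (∫⁻ y in {y : EuclideanSpace ℝ (Fin n) | ‖y‖ ≤ 1},
          ENNReal.ofReal
            (|2 * weight n lam kap x - weight n lam kap (x + y) - weight n lam kap (x - y)| /
              ‖y‖ ^ ((n : ℝ) + α))) ≤
        ENNReal.ofReal (C * weight n lam kap x) :=
  stmt_12_general n hn α hα lam hlam kap hke
end

section
/- (Far-field first-difference bound.) Let n ≥ 1 be an integer, α ∈ (0,2), λ ∈ (0,1), and κ ≥ 2 an even integer, and assume that either α ≥ 1 or 2λ < α. Let w = w_{λ,κ}. Then there exists a constant C = C(n,α,λ,κ) > 0 such that for all x ∈ ℝⁿ, ∫_{|y| > 1} |w(x) − w(x+y)| / |y|^{n+α} dy ≤ C · w(x). -/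
open Real MeasureTheory

lemma weight_pos (n : ℕ) (lam : ℝ) (kap : ℕ) (x : EuclideanSpace ℝ (Fin n)) :
    0 < weight n lam kap x :=
  Real.rpow_pos_of_pos (by positivity) _

lemma key (n : ℕ) (lam : ℝ) (hlam0 : 0 < lam) (kap : ℕ) (hkap : 1 ≤ kap)
    (x y : EuclideanSpace ℝ (Fin n)) (hy : 1 ≤ ‖y‖) :
    weight n lam kap (x + y) ≤
      ((2:ℝ) ^ (kap + 1)) ^ (lam / kap) * (weight n lam kap x * ‖y‖ ^ lam) := by
  have hk0 : (0:ℝ) < kap := by positivity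
  have he : 0 ≤ lam / kap := by positivity
  set a := ‖x‖
  set b := ‖x + y‖
  set c := ‖y‖
  have hb : 0 ≤ b := norm_nonneg _
  have hc : (1:ℝ) ≤ c := hy
  have habc : a ≤ b + c := by
    have := norm_add_le (x + y) (-y)
    simpa [a, b, c] using this
  -- main polynomial inequality
  have hmax : a ^ kap ≤ 2 ^ kap * (b ^ kap + c ^ kap) := by
    have h1 : a ^ kap ≤ (b + c) ^ kap := by
      apply pow_le_pow_left₀ (norm_nonneg _) habc
    have h2 : (b + c) ^ kap ≤ (2 * max b c) ^ kap := by
      apply pow_le_pow_left₀ (by positivity)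
      rcases le_total b c with h | h
      · simp [max_eq_right h]; nlinarith
      · simp [max_eq_left h]; nlinarith
    have h3 : (2 * max b c) ^ kap = 2 ^ kap * (max b c) ^ kap := by ring
    have h4 : (max b c) ^ kap ≤ b ^ kap + c ^ kap := by
      rcases le_total b c with h | h
      · simp [max_eq_right h]; positivity
      · simp [max_eq_left h]; positivity
    calc a ^ kap ≤ (b + c) ^ kap := h1
      _ ≤ 2 ^ kap * (max b c) ^ kap := by rw [← h3]; exact h2
      _ ≤ 2 ^ kap * (b ^ kap + c ^ kap) := by
          have : (0:ℝ) ≤ 2 ^ kap := by positivity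
          nlinarith
  have hpoly : 1 + a ^ kap ≤ 2 ^ (kap + 1) * ((1 + b ^ kap) * c ^ kap) := by
    have h2 : (1:ℝ) ≤ 2 ^ kap := one_le_pow₀ (by norm_num)
    have hck : (1:ℝ) ≤ c ^ kap := one_le_pow₀ hc
    have hbk : (0:ℝ) ≤ b ^ kap := by positivity
    have : (2:ℝ) ^ (kap + 1) = 2 * 2 ^ kap := by ring
    rw [this]
    nlinarith [mul_le_mul_of_nonneg_left hck (le_trans zero_le_one h2),
      mul_le_mul_of_nonneg_right h2 hbk, mul_nonneg (le_trans zero_le_one h2) hbk,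
      mul_le_mul_of_nonneg_left hck hbk]
  -- take rpow (lam/kap) of both sides
  have hA : (0:ℝ) < 1 + a ^ kap := by positivity
  have hB : (0:ℝ) < 1 + b ^ kap := by positivity
  have hrp : (1 + a ^ kap) ^ (lam / kap) ≤
      (2 ^ (kap + 1) : ℝ) ^ (lam / kap) * ((1 + b ^ kap) ^ (lam / kap) * c ^ lam) := by
    have := Real.rpow_le_rpow hA.le hpoly he
    rw [Real.mul_rpow (by positivity) (by positivity),
        Real.mul_rpow (by positivity) (by positivity)] at this
    have hclam : (c ^ kap : ℝ) ^ (lam / kap) = c ^ lam := by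
      rw [← Real.rpow_natCast c kap, ← Real.rpow_mul (by linarith)]
      congr 1
      field_simp
    rw [hclam] at this
    linarith
  -- conclude
  rw [weight, weight]
  have hBpow : (0:ℝ) < (1 + b ^ kap) ^ (lam / kap) := Real.rpow_pos_of_pos hB _
  have hApow : (0:ℝ) < (1 + a ^ kap) ^ (lam / kap) := Real.rpow_pos_of_pos hA _
  rw [Real.rpow_neg hA.le, Real.rpow_neg hB.le]
  calc ((1 + b ^ kap) ^ (lam / kap))⁻¹
      = (1 + a ^ kap) ^ (lam / kap) /
        ((1 + a ^ kap) ^ (lam / kap) * (1 + b ^ kap) ^ (lam / kap)) := by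
        field_simp
    _ ≤ ((2 ^ (kap + 1) : ℝ) ^ (lam / kap) * ((1 + b ^ kap) ^ (lam / kap) * c ^ lam)) /
        ((1 + a ^ kap) ^ (lam / kap) * (1 + b ^ kap) ^ (lam / kap)) := by
        gcongr
    _ = (2 ^ (kap + 1) : ℝ) ^ (lam / kap) * (((1 + a ^ kap) ^ (lam / kap))⁻¹ * c ^ lam) := by
        field_simp


theorem stmt_13 (n : ℕ) (hn : 1 ≤ n) (α : ℝ) (hα : α ∈ Set.Ioo (0 : ℝ) 2)
    (lam : ℝ) (hlam : lam ∈ Set.Ioo (0 : ℝ) 1)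
    (kap : ℕ) (hkap : 2 ≤ kap) (hke : Even kap)
    (hcase : 1 ≤ α ∨ 2 * lam < α) :
    ∃ C > 0, ∀ x : EuclideanSpace ℝ (Fin n),
      (∫⁻ y in {y : EuclideanSpace ℝ (Fin n) | 1 < ‖y‖},
          ENNReal.ofReal
            (|weight n lam kap x - weight n lam kap (x + y)| / ‖y‖ ^ ((n : ℝ) + α))) ≤
        ENNReal.ofReal (C * weight n lam kap x) := by
  obtain ⟨hl0, hl1⟩ := hlam
  obtain ⟨ha0, ha2⟩ := hα
  have hla : lam < α := by
    rcases hcase with h | h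
    · linarith
    · linarith
  set r : ℝ := (n : ℝ) + α - lam with hr_def
  have hrn : (n : ℝ) < r := by simp [hr_def]; linarith
  have hr0 : 0 < r := lt_of_le_of_lt (Nat.cast_nonneg n) hrn
  have hfr : (Module.finrank ℝ (EuclideanSpace ℝ (Fin n)) : ℝ) < r := by
    simpa using hrn
  have hK : (∫⁻ y : EuclideanSpace ℝ (Fin n),
      ENNReal.ofReal ((1 + ‖y‖) ^ (-r))) < ⊤ := finite_integral_one_add_norm hfr
  set K := ∫⁻ y : EuclideanSpace ℝ (Fin n), ENNReal.ofReal ((1 + ‖y‖) ^ (-r)) with hK_def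
  set C₁ : ℝ := ((2:ℝ) ^ (kap + 1)) ^ (lam / kap) with hC₁
  have hC₁pos : 0 < C₁ := Real.rpow_pos_of_pos (by positivity) _
  have hC₁one : 1 ≤ C₁ := Real.one_le_rpow (one_le_pow₀ (by norm_num)) (by positivity)
  set C₂ : ℝ := 2 * C₁ * (2:ℝ) ^ r with hC₂
  have hC₂pos : 0 < C₂ := by
    have := Real.rpow_pos_of_pos (by norm_num : (0:ℝ) < 2) r
    positivity
  refine ⟨C₂ * (K.toReal + 1), by positivity, fun x => ?_⟩
  have hwx := weight_pos n lam kap x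
  -- pointwise bound
  have hpt : ∀ y : EuclideanSpace ℝ (Fin n), 1 < ‖y‖ →
      |weight n lam kap x - weight n lam kap (x + y)| / ‖y‖ ^ ((n : ℝ) + α) ≤
        C₂ * weight n lam kap x * (1 + ‖y‖) ^ (-r) := by
    intro y hy
    have hy1 : (1:ℝ) ≤ ‖y‖ := hy.le
    have hy0 : (0:ℝ) < ‖y‖ := by linarith
    have hylam : (1:ℝ) ≤ ‖y‖ ^ lam := Real.one_le_rpow hy1 hl0.le
    have hwxy := weight_pos n lam kap (x + y)
    have hkey := key n lam hl0 kap (by omega) x y hy1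
    have hnum : |weight n lam kap x - weight n lam kap (x + y)| ≤
        2 * C₁ * weight n lam kap x * ‖y‖ ^ lam := by
      have h1 : weight n lam kap x ≤ C₁ * (weight n lam kap x * ‖y‖ ^ lam) := by
        calc weight n lam kap x ≤ weight n lam kap x * ‖y‖ ^ lam :=
              le_mul_of_one_le_right hwx.le hylam
          _ ≤ C₁ * (weight n lam kap x * ‖y‖ ^ lam) :=
              le_mul_of_one_le_left (by positivity) hC₁one
      calc |weight n lam kap x - weight n lam kap (x + y)| ≤
          weight n lam kap x + weight n lam kap (x + y) :=
            abs_sub_le_iff.2 ⟨by linarith, by linarith⟩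
        _ ≤ 2 * (C₁ * (weight n lam kap x * ‖y‖ ^ lam)) := by
            have hkey' : weight n lam kap (x + y) ≤
                C₁ * (weight n lam kap x * ‖y‖ ^ lam) := by rw [hC₁]; exact hkey
            linarith
        _ = 2 * C₁ * weight n lam kap x * ‖y‖ ^ lam := by ring
    have hden : (0:ℝ) < ‖y‖ ^ ((n : ℝ) + α) := Real.rpow_pos_of_pos hy0 _
    have step1 : |weight n lam kap x - weight n lam kap (x + y)| / ‖y‖ ^ ((n : ℝ) + α) ≤
        2 * C₁ * weight n lam kap x * ‖y‖ ^ (-r) := by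
      rw [div_le_iff₀ hden]
      have : ‖y‖ ^ (-r) * ‖y‖ ^ ((n : ℝ) + α) = ‖y‖ ^ lam := by
        rw [← Real.rpow_add hy0]; congr 1; simp [hr_def]
      calc |weight n lam kap x - weight n lam kap (x + y)| ≤
          2 * C₁ * weight n lam kap x * ‖y‖ ^ lam := hnum
        _ = 2 * C₁ * weight n lam kap x * ‖y‖ ^ (-r) * ‖y‖ ^ ((n : ℝ) + α) := by
            rw [mul_assoc (2 * C₁ * weight n lam kap x), this]
    have step2 : ‖y‖ ^ (-r) ≤ (2:ℝ) ^ r * (1 + ‖y‖) ^ (-r) := by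
      have h1 : (1 + ‖y‖) / 2 ≤ ‖y‖ := by linarith
      have h2 : ‖y‖ ^ (-r) ≤ ((1 + ‖y‖) / 2) ^ (-r) :=
        Real.rpow_le_rpow_of_nonpos (by linarith) h1 (by linarith)
      calc ‖y‖ ^ (-r) ≤ ((1 + ‖y‖) / 2) ^ (-r) := h2
        _ = (2:ℝ) ^ r * (1 + ‖y‖) ^ (-r) := by
            rw [Real.div_rpow (by linarith) (by norm_num), Real.rpow_neg (by positivity),
              Real.rpow_neg (by norm_num : (0:ℝ) ≤ 2)]
            field_simp
    calc |weight n lam kap x - weight n lam kap (x + y)| / ‖y‖ ^ ((n : ℝ) + α) ≤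
        2 * C₁ * weight n lam kap x * ‖y‖ ^ (-r) := step1
      _ ≤ 2 * C₁ * weight n lam kap x * ((2:ℝ) ^ r * (1 + ‖y‖) ^ (-r)) := by
          have : (0:ℝ) ≤ 2 * C₁ * weight n lam kap x := by positivity
          exact mul_le_mul_of_nonneg_left step2 this
      _ = C₂ * weight n lam kap x * (1 + ‖y‖) ^ (-r) := by rw [hC₂]; ring
  have hset : MeasurableSet {y : EuclideanSpace ℝ (Fin n) | 1 < ‖y‖} :=
    (isOpen_lt continuous_const continuous_norm).measurableSet
  calc (∫⁻ y in {y : EuclideanSpace ℝ (Fin n) | 1 < ‖y‖},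
        ENNReal.ofReal
          (|weight n lam kap x - weight n lam kap (x + y)| / ‖y‖ ^ ((n : ℝ) + α)))
      ≤ ∫⁻ y in {y : EuclideanSpace ℝ (Fin n) | 1 < ‖y‖},
          ENNReal.ofReal (C₂ * weight n lam kap x) *
            ENNReal.ofReal ((1 + ‖y‖) ^ (-r)) := by
        apply setLIntegral_mono' hset
        intro y hy
        rw [← ENNReal.ofReal_mul (by positivity)]
        exact ENNReal.ofReal_le_ofReal (by simpa [mul_assoc] using hpt y hy)
    _ ≤ ∫⁻ y : EuclideanSpace ℝ (Fin n),
          ENNReal.ofReal (C₂ * weight n lam kap x) *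
            ENNReal.ofReal ((1 + ‖y‖) ^ (-r)) :=
        setLIntegral_le_lintegral _ _
    _ = ENNReal.ofReal (C₂ * weight n lam kap x) * K := by
        rw [lintegral_const_mul' _ _ ENNReal.ofReal_ne_top]
    _ ≤ ENNReal.ofReal (C₂ * weight n lam kap x) * ENNReal.ofReal (K.toReal + 1) := by
        gcongr
        calc K = ENNReal.ofReal K.toReal := by rw [ENNReal.ofReal_toReal hK.ne]
          _ ≤ ENNReal.ofReal (K.toReal + 1) := ENNReal.ofReal_le_ofReal (by linarith)
    _ = ENNReal.ofReal (C₂ * (K.toReal + 1) * weight n lam kap x) := by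
        rw [← ENNReal.ofReal_mul (by positivity)]; ring_nf
end
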